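/- arXiv:2304.08857 — 5 statements merged into one kernel-verified Lean document; each statement's English description precedes it below -/
import Mathlib

section
/- Let a > 0, σ ≠ 0, f ≠ 0, b ≠ 0 be real numbers, set r = sqrt(a² + f²b²/σ²) and γ* = σ²(r − a)/f². Let γ₀ ≥ 0 with γ₀ ≠ γ*, and define γ(t) = e^{−2rt}·[1/(γ₀ − γ*) + (f²/(2rσ²))(1 − e^{−2rt})]⁻¹ + γ*. Then there exists a constant C > 0 such that |γ(t) − γ*| ≤ C·e^{−2rt} for all t ≥ 0; in particular γ(t) → γ* as t → ∞. -/
/-!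
With `s = e^{-2rt} ∈ (0, 1]`, `δ = γ₀ - γ*` and `k = f² / (2rσ²)`, one has
`γ(t) - γ* = s δ / (1 + k δ (1 - s))`. The denominator is the convex combination
`s · 1 + (1 - s)(1 + k δ)`, and `1 + k δ > 0` because `δ ≥ -γ*` and `k γ* ≤ (r - a) / (2r) < 1`.
So the denominator stays above `min 1 (1 + k δ) > 0` and `|γ(t) - γ*| ≤ C s`.
-/

open Real Filter Topology

lemma le_sqrt_sq_add {a x : ℝ} (ha : 0 ≤ a) (hx : 0 ≤ x) : a ≤ √(a ^ 2 + x) :=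
  (Real.le_sqrt ha (by positivity)).2 (le_add_of_nonneg_right hx)

lemma riccati_gain_mul_steady_lt_one {a r : ℝ} (σ f : ℝ) (ha : 0 < a) (hra : a ≤ r) :
    f ^ 2 / (2 * r * σ ^ 2) * (σ ^ 2 * (r - a) / f ^ 2) < 1 := by
  have hr : 0 < r := ha.trans_le hra
  have hfrac₀ : 0 ≤ (r - a) / (2 * r) := div_nonneg (by linarith) (by positivity)
  have hfrac : (r - a) / (2 * r) < 1 := (div_lt_one (by positivity)).2 (by linarith)
  -- `f ^ 2 / f ^ 2` and `σ ^ 2 / σ ^ 2` are `0` rather than `1` when `f = 0` or `σ = 0`.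
  calc f ^ 2 / (2 * r * σ ^ 2) * (σ ^ 2 * (r - a) / f ^ 2)
        = (r - a) / (2 * r) * (f ^ 2 / f ^ 2) * (σ ^ 2 / σ ^ 2) := by ring
    _ ≤ (r - a) / (2 * r) * 1 * 1 := by
        gcongr <;> exact div_self_le_one _
    _ < 1 := by simpa using hfrac

lemma min_le_one_add_mul_one_sub {c s : ℝ} (hs₀ : 0 ≤ s) (hs₁ : s ≤ 1) :
    min 1 (1 + c) ≤ 1 + c * (1 - s) :=
  calc min 1 (1 + c) = s * min 1 (1 + c) + (1 - s) * min 1 (1 + c) := by ring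
    _ ≤ s * 1 + (1 - s) * (1 + c) := by
        gcongr
        exacts [min_le_left _ _, min_le_right _ _]
    _ = 1 + c * (1 - s) := by ring

lemma abs_mul_inv_one_div_add_le {k δ s : ℝ} (hδ : δ ≠ 0) (hkδ : 0 < 1 + k * δ)
    (hs₀ : 0 ≤ s) (hs₁ : s ≤ 1) :
    |s * (1 / δ + k * (1 - s))⁻¹| ≤ |δ| / min 1 (1 + k * δ) * s := by
  have hmin : 0 < min 1 (1 + k * δ) := lt_min one_pos hkδ
  have hden : min 1 (1 + k * δ) ≤ 1 + k * δ * (1 - s) := min_le_one_add_mul_one_sub hs₀ hs₁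
  have hform : (1 / δ + k * (1 - s))⁻¹ = δ / (1 + k * δ * (1 - s)) := by
    rw [div_add' _ _ _ hδ, inv_div]
    ring
  rw [hform, abs_mul, abs_of_nonneg hs₀, abs_div, abs_of_pos (hmin.trans_le hden), mul_comm]
  gcongr

lemma tendsto_of_abs_sub_le_mul_exp {g : ℝ → ℝ} {L C c : ℝ} (hc : c < 0)
    (h : ∀ t, 0 ≤ t → |g t - L| ≤ C * exp (c * t)) : Tendsto g atTop (𝓝 L) := by
  have hexp : Tendsto (fun t => C * exp (c * t)) atTop (𝓝 0) := by
    simpa using (tendsto_exp_atBot.comp (tendsto_id.const_mul_atTop_of_neg hc)).const_mul C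
  rw [tendsto_iff_norm_sub_tendsto_zero]
  exact squeeze_zero' (.of_forall fun _ => norm_nonneg _)
    ((eventually_ge_atTop 0).mono h) hexp

theorem riccati_exponential_convergence_general
    (a σ f b : ℝ) (ha : 0 < a)
    (r γs : ℝ)
    (hr : r = Real.sqrt (a ^ 2 + f ^ 2 * b ^ 2 / σ ^ 2))
    (hγs : γs = σ ^ 2 * (r - a) / f ^ 2)
    (γ₀ : ℝ) (hγ₀ : 0 ≤ γ₀) (hne : γ₀ ≠ γs)
    (γ : ℝ → ℝ)
    (hγ : ∀ t : ℝ, γ t =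
      Real.exp (-2 * r * t) *
        (1 / (γ₀ - γs) + f ^ 2 / (2 * r * σ ^ 2) * (1 - Real.exp (-2 * r * t)))⁻¹
      + γs) :
    (∃ C : ℝ, 0 < C ∧ ∀ t : ℝ, 0 ≤ t → |γ t - γs| ≤ C * Real.exp (-2 * r * t)) ∧
    Filter.Tendsto γ Filter.atTop (nhds γs) := by
  have hra : a ≤ r := hr ▸ le_sqrt_sq_add ha.le (by positivity)
  have hr₀ : 0 < r := ha.trans_le hra
  set k := f ^ 2 / (2 * r * σ ^ 2)
  have hkγs : k * γs < 1 := hγs ▸ riccati_gain_mul_steady_lt_one σ f ha hra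
  have hkδ : 0 < 1 + k * (γ₀ - γs) := by
    have : 0 ≤ k * γ₀ := mul_nonneg (by positivity) hγ₀
    linarith [mul_sub k γ₀ γs]
  have hδ : γ₀ - γs ≠ 0 := sub_ne_zero.2 hne
  have hbound : ∀ t : ℝ, 0 ≤ t →
      |γ t - γs| ≤ |γ₀ - γs| / min 1 (1 + k * (γ₀ - γs)) * exp (-2 * r * t) := by
    intro t ht
    rw [hγ t, add_sub_cancel_right]
    exact abs_mul_inv_one_div_add_le hδ hkδ (exp_pos _).le
      (exp_le_one_iff.2 (by nlinarith))
  refine ⟨⟨_, div_pos (abs_pos.2 hδ) (lt_min one_pos hkδ), hbound⟩, ?_⟩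
  exact tendsto_of_abs_sub_le_mul_exp (by linarith) hbound

/-- Exponential convergence of the Riccati solution to its steady state:
`|γ(t) − γ*| ≤ C e^{−2rt}` and hence `γ(t) → γ*` as `t → ∞`. -/
theorem riccati_exponential_convergence
    (a σ f b : ℝ) (ha : 0 < a) (hσ : σ ≠ 0) (hf : f ≠ 0) (hb : b ≠ 0)
    (r γs : ℝ)
    (hr : r = Real.sqrt (a ^ 2 + f ^ 2 * b ^ 2 / σ ^ 2))
    (hγs : γs = σ ^ 2 * (r - a) / f ^ 2)
    (γ₀ : ℝ) (hγ₀ : 0 ≤ γ₀) (hne : γ₀ ≠ γs)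
    (γ : ℝ → ℝ)
    (hγ : ∀ t : ℝ, γ t =
      Real.exp (-2 * r * t) *
        (1 / (γ₀ - γs) + f ^ 2 / (2 * r * σ ^ 2) * (1 - Real.exp (-2 * r * t)))⁻¹
      + γs) :
    (∃ C : ℝ, 0 < C ∧ ∀ t : ℝ, 0 ≤ t → |γ t - γs| ≤ C * Real.exp (-2 * r * t)) ∧
    Filter.Tendsto γ Filter.atTop (nhds γs) :=
  riccati_exponential_convergence_general a σ f b ha r γs hr hγs γ₀ hγ₀ hne γ hγ
end

section
/- The function h(x) = (x − 1 + e^{−x})/x³ is strictly decreasing on (0, ∞). -/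
/-!
Up to the positive factor `x⁻⁴`, the derivative of `h` is `g x = 3 - 2x - (x + 3)e^{-x}`.
Now `g 0 = g' 0 = 0` and `g'' x = -(x + 1)e^{-x} < 0` for `x > 0`, so two applications of the
mean value theorem give `g' < 0` and then `g < 0` on `(0, ∞)`.
-/

open Real Set

lemma lt_of_hasDerivAt_neg_of_lt {f f' : ℝ → ℝ} {a x : ℝ} (hf : ∀ y, HasDerivAt f (f' y) y)
    (hf' : ∀ y, a < y → f' y < 0) (hx : a < x) : f x < f a := by
  have hanti : StrictAntiOn f (Ici a) := by
    refine strictAntiOn_of_hasDerivWithinAt_neg (convex_Ici a)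
      (fun y _ ↦ (hf y).continuousAt.continuousWithinAt) (fun y _ ↦ (hf y).hasDerivWithinAt) ?_
    rw [interior_Ici]
    exact hf'
  exact hanti self_mem_Ici hx.le hx

lemma add_two_mul_exp_neg_lt_two {x : ℝ} (hx : 0 < x) : (x + 2) * exp (-x) < 2 := by
  have hderiv (y : ℝ) : HasDerivAt (fun y ↦ (y + 2) * exp (-y)) (-((y + 1) * exp (-y))) y :=
    (((hasDerivAt_id' y).add_const 2).mul (hasDerivAt_neg y).exp).congr_deriv (by ring)
  have hneg (y : ℝ) (hy : 0 < y) : -((y + 1) * exp (-y)) < 0 :=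
    neg_neg_of_pos (mul_pos (by linarith) (exp_pos _))
  simpa using lt_of_hasDerivAt_neg_of_lt hderiv hneg hx

lemma three_sub_two_mul_lt_add_three_mul_exp_neg {x : ℝ} (hx : 0 < x) :
    3 - 2 * x < (x + 3) * exp (-x) := by
  have hderiv (y : ℝ) : HasDerivAt (fun y ↦ 3 - 2 * y - (y + 3) * exp (-y))
      ((y + 2) * exp (-y) - 2) y :=
    ((((hasDerivAt_id' y).const_mul 2).const_sub 3).sub
      (((hasDerivAt_id' y).add_const 3).mul (hasDerivAt_neg y).exp)).congr_deriv (by ring)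
  have hneg (y : ℝ) (hy : 0 < y) : (y + 2) * exp (-y) - 2 < 0 :=
    sub_neg.mpr (add_two_mul_exp_neg_lt_two hy)
  have := lt_of_hasDerivAt_neg_of_lt hderiv hneg hx
  simp only [mul_zero, sub_zero, zero_add, neg_zero, exp_zero, mul_one, sub_self] at this
  linarith

/-- The function `h(x) = (x − 1 + e^{−x})/x³` is strictly decreasing on `(0, ∞)`. -/
theorem strictAntiOn_mme_link :
    StrictAntiOn (fun x : ℝ => (x - 1 + Real.exp (-x)) / x ^ 3) (Set.Ioi (0 : ℝ)) := by
  have hderiv (x : ℝ) (hx : 0 < x) : HasDerivAt (fun x : ℝ => (x - 1 + exp (-x)) / x ^ 3)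
      (x ^ 2 * (3 - 2 * x - (x + 3) * exp (-x)) / (x ^ 3) ^ 2) x := by
    have hnum : HasDerivAt (fun x : ℝ => x - 1 + exp (-x)) (1 - exp (-x)) x :=
      (((hasDerivAt_id' x).sub_const 1).add (hasDerivAt_neg x).exp).congr_deriv (by ring)
    exact (hnum.div (hasDerivAt_pow 3 x) (pow_ne_zero 3 hx.ne')).congr_deriv (by ring)
  refine strictAntiOn_of_hasDerivWithinAt_neg (convex_Ioi 0)
    (fun x hx ↦ (hderiv x hx).continuousAt.continuousWithinAt)
    (fun x hx ↦ (hderiv x (interior_subset hx)).hasDerivWithinAt) fun x hx ↦ ?_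
  have hx : 0 < x := interior_subset hx
  have hg := three_sub_two_mul_lt_add_three_mul_exp_neg hx
  exact div_neg_of_neg_of_pos (mul_neg_of_pos_of_neg (by positivity) (by linarith)) (by positivity)
end

section
/- The function h(x) = (e^{−x} − 1 + x)/(1 − e^{−x})² is strictly increasing on (0, ∞). -/
/-! With `u = e^{-x}`, the derivative of `h` is `(1 - u² - 2xu) / (1 - u)³`. For `x > 0` the
denominator is positive, and the numerator is `e^{-x} (e^x - e^{-x} - 2x) = 2 e^{-x} (sinh x - x)`,
which is positive because `sinh x > x`. -/

open Real Set

lemma two_mul_mul_exp_neg_lt_one_sub_exp_neg_sq {x : ℝ} (hx : 0 < x) :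
    2 * x * exp (-x) < 1 - exp (-x) ^ 2 := by
  have hsinh : 2 * x < exp x - exp (-x) := by
    have := self_lt_sinh_iff.mpr hx
    rw [sinh_eq] at this
    linarith
  have hinv : exp x * exp (-x) = 1 := by rw [← exp_add, add_neg_cancel, exp_zero]
  calc 2 * x * exp (-x) < (exp x - exp (-x)) * exp (-x) := by gcongr
    _ = 1 - exp (-x) ^ 2 := by rw [sub_mul, hinv, sq]

lemma hasDerivAt_exp_neg_sub_one_add_self_div_one_sub_exp_neg_sq {x : ℝ} (hx : x ≠ 0) :
    HasDerivAt (fun x : ℝ => (exp (-x) - 1 + x) / (1 - exp (-x)) ^ 2)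
      ((1 - exp (-x) ^ 2 - 2 * x * exp (-x)) / (1 - exp (-x)) ^ 3) x := by
  have hu : 1 - exp (-x) ≠ 0 := by
    rw [sub_ne_zero, ne_comm, Ne, exp_eq_one_iff, neg_eq_zero]
    exact hx
  have he : HasDerivAt (fun x : ℝ => exp (-x)) (-exp (-x)) x := by
    simpa using (hasDerivAt_neg x).exp
  have hnum : HasDerivAt (fun x : ℝ => exp (-x) - 1 + x) (-exp (-x) + 1) x :=
    (he.sub_const 1).add (hasDerivAt_id x)
  have hden : HasDerivAt (fun x : ℝ => (1 - exp (-x)) ^ 2)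
      (2 * (1 - exp (-x)) * exp (-x)) x := by
    simpa using (he.const_sub 1).fun_pow 2
  refine (hnum.div hden (pow_ne_zero 2 hu)).congr_deriv ?_
  field_simp
  ring

/-- The function `h(x) = (e^{−x} − 1 + x)/(1 − e^{−x})²` is strictly increasing
on `(0, ∞)`. -/
theorem strictMonoOn_mme_link_af :
    StrictMonoOn (fun x : ℝ => (Real.exp (-x) - 1 + x) / (1 - Real.exp (-x)) ^ 2)
      (Set.Ioi (0 : ℝ)) := by
  have hderiv : ∀ x ∈ Ioi (0 : ℝ), HasDerivAt _ _ x := fun x hx =>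
    hasDerivAt_exp_neg_sub_one_add_self_div_one_sub_exp_neg_sq (ne_of_gt hx)
  refine strictMonoOn_of_hasDerivWithinAt_pos (convex_Ioi 0) (HasDerivAt.continuousOn hderiv)
    (fun x hx => (hderiv x (interior_subset hx)).hasDerivWithinAt) fun x hx => ?_
  rw [interior_Ioi] at hx
  have hu : 0 < 1 - exp (-x) := sub_pos.mpr (exp_lt_one_iff.mpr (neg_lt_zero.mpr hx))
  exact div_pos (sub_pos.mpr (two_mul_mul_exp_neg_lt_one_sub_exp_neg_sq hx)) (pow_pos hu 3)
end

section
/- For every real x > 0 one has 1 − 2x·e^{−x} − e^{−2x} > 0. -/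
/-- For every `x > 0`, `1 − 2x e^{−x} − e^{−2x} > 0`. -/
theorem mme_link_af_deriv_numerator_pos (x : ℝ) (hx : 0 < x) :
    0 < 1 - 2 * x * Real.exp (-x) - Real.exp (-2 * x) := by
  have hs := Real.self_lt_sinh_iff.mpr hx
  rw [Real.sinh_eq] at hs
  have he : 0 < Real.exp (-x) := Real.exp_pos _
  have h2 : Real.exp (-2 * x) = Real.exp (-x) * Real.exp (-x) := by
    rw [← Real.exp_add]; ring_nf
  have hee : Real.exp x * Real.exp (-x) = 1 := by
    rw [← Real.exp_add]; simp
  nlinarith [hs, he, hee]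
end

section
/- Let a > 0 and let j, k be integers with j ≤ k − 1. Then ∫_{k−1}^{k}∫_{k−1}^{k}∫_{j−1}^{j}∫_{j−1}^{j} [ (1/(4a²))·e^{−a|t−s|}·e^{−a|r−q|} + (1/(2a²))·e^{−a(t+s)}·e^{a(r+q)} ] dq dr ds dt = (e^{−a} − 1 + a)²/a⁶ + (e^{2a}·(1 − e^{−a})⁴/(2a⁶))·e^{−2a(k−j)}. -/
/-!
The integrand is a sum of two terms, each a product of a function of `(t, s)` and a function of
`(u, q)`, so by linearity the quadruple integral is the corresponding sum of products of double
integrals. The exponential term factors further into one-dimensional integrals of exponentials.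
For the other term, splitting at `s = t` gives `∫ s in x..y, e^{-a|t-s|}` in closed form, and
integrating once more gives `2 (e^{-aL} - 1 + aL) / a²` over a square of side `L = y - x`.
-/

open intervalIntegral Real Function Set

lemma integral_exp_mul {c : ℝ} (hc : c ≠ 0) (x y : ℝ) :
    ∫ s in x..y, exp (c * s) = (exp (c * y) - exp (c * x)) / c := by
  rw [integral_comp_mul_left (fun s => exp s) hc, integral_exp, smul_eq_mul, inv_mul_eq_div]

lemma integral_exp_neg_mul_abs_sub {a : ℝ} (ha : a ≠ 0) {x y t : ℝ} (hxt : x ≤ t) (hty : t ≤ y) :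
    ∫ s in x..y, exp (-a * |t - s|) = (2 - exp (-a * (t - x)) - exp (-a * (y - t))) / a := by
  have hint : ∀ x' y',
      IntervalIntegrable (fun s => exp (-a * |t - s|)) MeasureTheory.volume x' y' :=
    fun _ _ => (by fun_prop : Continuous _).intervalIntegrable _ _
  have left : ∫ s in x..t, exp (-a * |t - s|) = ∫ s in x..t, exp (-a * (t - s)) :=
    integral_congr fun s hs => by
      rw [uIcc_of_le hxt] at hs
      simp only [abs_of_nonneg (sub_nonneg.2 hs.2)]
  have right : ∫ s in t..y, exp (-a * |t - s|) = ∫ s in t..y, exp (-a * (s - t)) :=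
    integral_congr fun s hs => by
      rw [uIcc_of_le hty] at hs
      simp only [abs_sub_comm t s, abs_of_nonneg (sub_nonneg.2 hs.1)]
  rw [← integral_add_adjacent_intervals (hint x t) (hint t y), left, right,
    integral_comp_sub_left (fun s => exp (-a * s)), integral_comp_sub_right (fun s => exp (-a * s)),
    integral_exp_mul (neg_ne_zero.2 ha), integral_exp_mul (neg_ne_zero.2 ha), sub_self, mul_zero,
    exp_zero]
  field_simp
  ring

lemma integral_integral_exp_neg_mul_abs_sub {a : ℝ} (ha : a ≠ 0) {x y : ℝ} (hxy : x ≤ y) :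
    ∫ t in x..y, ∫ s in x..y, exp (-a * |t - s|)
      = 2 * (exp (-a * (y - x)) - 1 + a * (y - x)) / a ^ 2 := by
  rw [integral_congr (g := fun t => (2 - exp (-a * (t - x)) - exp (-a * (y - t))) / a)
    fun t ht => by
      rw [uIcc_of_le hxy] at ht
      exact integral_exp_neg_mul_abs_sub ha ht.1 ht.2]
  have hint : ∀ f : ℝ → ℝ, Continuous f → IntervalIntegrable f MeasureTheory.volume x y :=
    fun f hf => hf.intervalIntegrable x y
  rw [integral_div, integral_sub (hint _ (by fun_prop)) (hint _ (by fun_prop)),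
    integral_sub (hint _ (by fun_prop)) (hint _ (by fun_prop)), integral_const,
    integral_comp_sub_right (fun t => exp (-a * t)), integral_comp_sub_left (fun t => exp (-a * t))]
  simp only [sub_self, integral_exp_mul (neg_ne_zero.2 ha), mul_zero, exp_zero, smul_eq_mul]
  field_simp
  ring

namespace intervalIntegral

lemma integral_integral_add {F G : ℝ → ℝ → ℝ} (hF : Continuous (uncurry F))
    (hG : Continuous (uncurry G)) (x₁ y₁ x₂ y₂ : ℝ) :
    ∫ t in x₁..y₁, ∫ s in x₂..y₂, (F t s + G t s)
      = (∫ t in x₁..y₁, ∫ s in x₂..y₂, F t s) + ∫ t in x₁..y₁, ∫ s in x₂..y₂, G t s := by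
  have inner : ∀ t, ∫ s in x₂..y₂, (F t s + G t s)
      = (∫ s in x₂..y₂, F t s) + ∫ s in x₂..y₂, G t s := fun t =>
    integral_add ((hF.uncurry_left t).intervalIntegrable x₂ y₂)
      ((hG.uncurry_left t).intervalIntegrable x₂ y₂)
  simp only [inner]
  exact integral_add
    ((continuous_parametric_intervalIntegral_of_continuous' hF x₂ y₂).intervalIntegrable x₁ y₁)
    ((continuous_parametric_intervalIntegral_of_continuous' hG x₂ y₂).intervalIntegrable x₁ y₁)

lemma integral_integral_integral_integral_mul_add_mul {F G H K : ℝ → ℝ → ℝ}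
    (hF : Continuous (uncurry F)) (hG : Continuous (uncurry G))
    (hH : Continuous (uncurry H)) (hK : Continuous (uncurry K)) (x₁ y₁ x₂ y₂ x₃ y₃ x₄ y₄ : ℝ) :
    ∫ t in x₁..y₁, ∫ s in x₂..y₂, ∫ u in x₃..y₃, ∫ q in x₄..y₄, (F t s * G u q + H t s * K u q)
      = (∫ t in x₁..y₁, ∫ s in x₂..y₂, F t s) * (∫ u in x₃..y₃, ∫ q in x₄..y₄, G u q)
        + (∫ t in x₁..y₁, ∫ s in x₂..y₂, H t s) * (∫ u in x₃..y₃, ∫ q in x₄..y₄, K u q) := by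
  have inner : ∀ t s, ∫ u in x₃..y₃, ∫ q in x₄..y₄, (F t s * G u q + H t s * K u q)
      = F t s * (∫ u in x₃..y₃, ∫ q in x₄..y₄, G u q)
        + H t s * (∫ u in x₃..y₃, ∫ q in x₄..y₄, K u q) := fun t s => by
    rw [integral_integral_add (by fun_prop) (by fun_prop)]
    simp only [integral_const_mul]
  simp only [inner]
  rw [integral_integral_add (by fun_prop) (by fun_prop)]
  simp only [integral_mul_const]

end intervalIntegral

theorem quadruple_integral_eta_sq_general (a : ℝ) (ha : 0 < a) (j k : ℤ) :
    (∫ t in ((k:ℝ) - 1)..(k:ℝ), ∫ s in ((k:ℝ) - 1)..(k:ℝ),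
      ∫ u in ((j:ℝ) - 1)..(j:ℝ), ∫ q in ((j:ℝ) - 1)..(j:ℝ),
        (1 / (4 * a ^ 2) * Real.exp (-a * |t - s|) * Real.exp (-a * |u - q|)
          + 1 / (2 * a ^ 2) * Real.exp (-a * (t + s)) * Real.exp (a * (u + q))))
      = (Real.exp (-a) - 1 + a) ^ 2 / a ^ 6
        + Real.exp (2 * a) * (1 - Real.exp (-a)) ^ 4 / (2 * a ^ 6)
            * Real.exp (-2 * a * ((k:ℝ) - (j:ℝ))) := by
  have ha₀ : a ≠ 0 := ha.ne'
  rw [integral_integral_integral_integral_mul_add_mul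
    (F := fun t s => 1 / (4 * a ^ 2) * exp (-a * |t - s|)) (G := fun u q => exp (-a * |u - q|))
    (H := fun t s => 1 / (2 * a ^ 2) * exp (-a * (t + s))) (K := fun u q => exp (a * (u + q)))
    (by fun_prop) (by fun_prop) (by fun_prop) (by fun_prop)]
  simp only [integral_const_mul, mul_add, exp_add, integral_mul_const,
    integral_integral_exp_neg_mul_abs_sub ha₀ (sub_le_self _ zero_le_one), sub_sub_cancel, mul_one,
    integral_exp_mul ha₀, integral_exp_mul (neg_ne_zero.2 ha₀)]
  have hk : exp (-a * ((k:ℝ) - 1)) = exp (-a * k) * exp a := by rw [← exp_add]; ring_nf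
  have hj : exp (a * ((j:ℝ) - 1)) = exp (a * j) * exp (-a) := by rw [← exp_add]; ring_nf
  have hkj : exp (-2 * a * ((k:ℝ) - j)) = exp (-a * k) ^ 2 * exp (a * j) ^ 2 := by
    rw [← exp_nat_mul, ← exp_nat_mul, ← exp_add]; ring_nf
  have h2a : exp (2 * a) = exp a ^ 2 := by rw [← exp_nat_mul]; ring_nf
  have hinv : exp a * exp (-a) = 1 := by rw [← exp_add, add_neg_cancel, exp_zero]
  rw [hk, hj, hkj, h2a]
  -- `(1 - e^a)² = e^{2a} (1 - e^{-a})²` since `e^a e^{-a} = 1`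
  linear_combination exp (-a * k) ^ 2 * exp (a * j) ^ 2 * (1 - exp (-a)) ^ 2 / (2 * a ^ 6)
    * (2 * exp a - 1 - exp a * exp (-a)) * hinv

/-- Quadruple integral identity for `E[η_k² η_j²]`: for `a > 0` and integers
`j ≤ k − 1`,
`∫_{k−1}^{k}∫_{k−1}^{k}∫_{j−1}^{j}∫_{j−1}^{j}
  [(1/(4a²)) e^{−a|t−s|} e^{−a|r−q|} + (1/(2a²)) e^{−a(t+s)} e^{a(r+q)}] dq dr ds dt
 = (e^{−a} − 1 + a)²/a⁶ + (e^{2a}(1 − e^{−a})⁴/(2a⁶)) e^{−2a(k−j)}`. -/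
theorem quadruple_integral_eta_sq (a : ℝ) (ha : 0 < a) (j k : ℤ) (hjk : j ≤ k - 1) :
    (∫ t in ((k:ℝ) - 1)..(k:ℝ), ∫ s in ((k:ℝ) - 1)..(k:ℝ),
      ∫ u in ((j:ℝ) - 1)..(j:ℝ), ∫ q in ((j:ℝ) - 1)..(j:ℝ),
        (1 / (4 * a ^ 2) * Real.exp (-a * |t - s|) * Real.exp (-a * |u - q|)
          + 1 / (2 * a ^ 2) * Real.exp (-a * (t + s)) * Real.exp (a * (u + q))))
      = (Real.exp (-a) - 1 + a) ^ 2 / a ^ 6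
        + Real.exp (2 * a) * (1 - Real.exp (-a)) ^ 4 / (2 * a ^ 6)
            * Real.exp (-2 * a * ((k:ℝ) - (j:ℝ))) :=
  quadruple_integral_eta_sq_general a ha j k
end
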